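/- arXiv:1309.5803 — 3 statements merged into one kernel-verified Lean document; each statement's English description precedes it below -/
import Mathlib

section
/- Fix an integer k with 1 ≤ k ≤ N (and m ≥ 1). The optimal value of the multi-hypothesis anomaly detection problem equals the optimal value of the cardinality-constrained sparse problem; that is: min over all subsets γ ⊆ {1,…,N} with |γ| = k of [ Σ_{s∈γ} (inf_{θ_s ∈ ℝ^m} ‖Y_s − Φ_s θ_s‖₂²) + inf_{θ₀ ∈ ℝ^m} Σ_{s∉γ} ‖Y_s − Φ_s θ₀‖₂² ] is equal to the infimum, over all tuples (θ̄, θ₁, …, θ_N) ∈ (ℝ^m)^{N+1} such that the number of indices i with θᵢ ≠ θ̄ is exactly k, of Σ_{i=1}^N ‖Yᵢ − Φᵢ θᵢ‖₂². -/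
open scoped BigOperators

/-- Euclidean norm on `ℝ^n`. -/
noncomputable def eNorm2 {n : ℕ} (v : Fin n → ℝ) : ℝ := Real.sqrt (∑ i, v i ^ 2)

lemma eNorm2_sq {n : ℕ} (v : Fin n → ℝ) : eNorm2 v ^ 2 = ∑ i, v i ^ 2 :=
  Real.sq_sqrt (Finset.sum_nonneg fun i _ => sq_nonneg _)

lemma eNorm2_sq_nonneg {n : ℕ} (v : Fin n → ℝ) : 0 ≤ eNorm2 v ^ 2 := sq_nonneg _

section aux

variable {N Ω m : ℕ}

/-- continuity of the misfit. -/
lemma misfit_continuous (y : Fin Ω → ℝ) (M : Matrix (Fin Ω) (Fin m) ℝ) :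
    Continuous fun θ : Fin m → ℝ => ∑ j, (y j - M.mulVec θ j) ^ 2 := by
  apply continuous_finset_sum
  intro j _
  apply Continuous.pow
  apply Continuous.sub continuous_const
  simp only [Matrix.mulVec, dotProduct]
  exact continuous_finset_sum _ fun l _ => continuous_const.mul (continuous_apply l)

/-- near-optimal parameter avoiding one point. -/
lemma exists_ne_lt (hm : 1 ≤ m) (y : Fin Ω → ℝ) (M : Matrix (Fin Ω) (Fin m) ℝ)
    (θ0 : Fin m → ℝ) {c : ℝ}
    (h : (⨅ θ : Fin m → ℝ, ∑ j, (y j - M.mulVec θ j) ^ 2) < c) :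
    ∃ θ : Fin m → ℝ, θ ≠ θ0 ∧ ∑ j, (y j - M.mulVec θ j) ^ 2 < c := by
  classical
  obtain ⟨θ, hθ⟩ := exists_lt_of_ciInf_lt h
  by_cases hne : θ = θ0
  · subst hne
    set e : Fin m → ℝ := Pi.single (⟨0, hm⟩ : Fin m) 1 with he
    have hg : Continuous fun t : ℝ => ∑ j, (y j - M.mulVec (θ + t • e) j) ^ 2 := by
      apply (misfit_continuous y M).comp
      exact continuous_const.add (continuous_id.smul continuous_const)
    have hopen : IsOpen {t : ℝ | ∑ j, (y j - M.mulVec (θ + t • e) j) ^ 2 < c} :=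
      isOpen_lt hg continuous_const
    have h0 : (0 : ℝ) ∈ {t : ℝ | ∑ j, (y j - M.mulVec (θ + t • e) j) ^ 2 < c} := by
      simpa using hθ
    obtain ⟨δ, hδ, hball⟩ := Metric.isOpen_iff.1 hopen 0 h0
    refine ⟨θ + (δ / 2) • e, ?_, ?_⟩
    · intro hcontra
      have h1 : (δ / 2) • e = 0 := by
        have := congrArg (· - θ) hcontra
        simpa [add_sub_cancel_left] using this
      have h2 := congrFun h1 (⟨0, hm⟩ : Fin m)
      rw [he] at h2
      simp [Pi.single_apply] at h2
      linarith
    · have hmem : (δ / 2) ∈ Metric.ball (0 : ℝ) δ := by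
        rw [Metric.mem_ball, Real.dist_eq, sub_zero,
          abs_of_pos (by linarith : (0:ℝ) < δ / 2)]
        linarith
      exact hball hmem
  · exact ⟨θ, hne, hθ⟩

end aux

/-- The optimal value of the multi-hypothesis anomaly detection problem (minimizing over
all subsets `γ` of exactly `k` abnormal systems, fitting abnormal systems individually and
the rest by a common nominal parameter) equals the optimal value of the
cardinality-constrained sparse problem (minimizing the total misfit over all tuples
`(θ̄, θ₁, …, θ_N)` such that exactly `k` of the `θᵢ` differ from `θ̄`). -/
theorem multihypothesis_eq_cardinality_constrained
    (N Ω m k : ℕ) (hm : 1 ≤ m) (hk : 1 ≤ k) (hkN : k ≤ N)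
    (Y : Fin N → Fin Ω → ℝ) (Φ : Fin N → Matrix (Fin Ω) (Fin m) ℝ) :
    (⨅ γ : {γ : Finset (Fin N) // γ.card = k},
        (∑ s ∈ γ.1, ⨅ θs : Fin m → ℝ, eNorm2 (Y s - (Φ s).mulVec θs) ^ 2) +
          ⨅ θ0 : Fin m → ℝ, ∑ s ∈ γ.1ᶜ, eNorm2 (Y s - (Φ s).mulVec θ0) ^ 2) =
      ⨅ t : {t : (Fin m → ℝ) × (Fin N → Fin m → ℝ) //
          (Finset.univ.filter fun i => t.2 i ≠ t.1).card = k},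
        ∑ i, eNorm2 (Y i - (Φ i).mulVec (t.1.2 i)) ^ 2 := by
  classical
  -- the misfit function
  set f : Fin N → (Fin m → ℝ) → ℝ := fun s θ => ∑ j, (Y s j - (Φ s).mulVec θ j) ^ 2 with hf
  have hfval : ∀ (s : Fin N) (θ : Fin m → ℝ),
      eNorm2 (Y s - (Φ s).mulVec θ) ^ 2 = f s θ := by
    intro s θ
    rw [eNorm2_sq]
    simp [hf]
  simp only [hfval]
  have hf_nonneg : ∀ s θ, 0 ≤ f s θ := fun s θ =>
    Finset.sum_nonneg fun j _ => sq_nonneg _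
  have hIbdd : ∀ s : Fin N, BddBelow (Set.range fun θ : Fin m → ℝ => f s θ) := by
    intro s
    exact ⟨0, by rintro x ⟨θ, rfl⟩; exact hf_nonneg s θ⟩
  have hI_nonneg : ∀ s : Fin N, 0 ≤ ⨅ θ : Fin m → ℝ, f s θ := fun s =>
    le_ciInf fun θ => hf_nonneg s θ
  -- nonemptiness of the index types
  obtain ⟨γ₀, -, hγ₀⟩ := Finset.exists_subset_card_eq (s := (Finset.univ : Finset (Fin N))) (n := k)
    (by simpa using hkN)
  haveI hΓne : Nonempty {γ : Finset (Fin N) // γ.card = k} := ⟨⟨γ₀, hγ₀⟩⟩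
  have hone : (fun _ : Fin m => (1 : ℝ)) ≠ (fun _ => (0 : ℝ)) := by
    intro h
    have := congrFun h ⟨0, hm⟩
    norm_num at this
  haveI hTne : Nonempty {t : (Fin m → ℝ) × (Fin N → Fin m → ℝ) //
      (Finset.univ.filter fun i => t.2 i ≠ t.1).card = k} := by
    refine ⟨⟨⟨fun _ => 0, fun i => if i ∈ γ₀ then (fun _ => 1) else (fun _ => 0)⟩, ?_⟩⟩
    convert hγ₀ using 2
    ext i
    by_cases hi : i ∈ γ₀ <;> simp [hi, hone]
  -- bddBelow of all ranges
  have hTbdd : BddBelow (Set.range fun t : {t : (Fin m → ℝ) × (Fin N → Fin m → ℝ) //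
      (Finset.univ.filter fun i => t.2 i ≠ t.1).card = k} => ∑ i, f i (t.1.2 i)) := by
    refine ⟨0, ?_⟩
    rintro x ⟨t, rfl⟩
    exact Finset.sum_nonneg fun i _ => hf_nonneg _ _
  have hBbdd : ∀ γ : Finset (Fin N),
      BddBelow (Set.range fun θ0 : Fin m → ℝ => ∑ s ∈ γᶜ, f s θ0) := by
    intro γ
    refine ⟨0, ?_⟩
    rintro x ⟨θ0, rfl⟩
    exact Finset.sum_nonneg fun s _ => hf_nonneg _ _
  have hΓbdd : BddBelow (Set.range fun γ : {γ : Finset (Fin N) // γ.card = k} =>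
      (∑ s ∈ γ.1, ⨅ θs : Fin m → ℝ, f s θs) + ⨅ θ0 : Fin m → ℝ, ∑ s ∈ γ.1ᶜ, f s θ0) := by
    refine ⟨0, ?_⟩
    rintro x ⟨γ, rfl⟩
    have h1 : 0 ≤ ∑ s ∈ γ.1, ⨅ θs : Fin m → ℝ, f s θs :=
      Finset.sum_nonneg fun s _ => hI_nonneg s
    have h2 : 0 ≤ ⨅ θ0 : Fin m → ℝ, ∑ s ∈ γ.1ᶜ, f s θ0 :=
      le_ciInf fun θ0 => Finset.sum_nonneg fun s _ => hf_nonneg _ _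
    exact add_nonneg h1 h2
  apply le_antisymm
  · -- LHS ≤ RHS
    apply le_ciInf
    rintro ⟨⟨θb, θ⟩, ht⟩
    set γ : Finset (Fin N) := Finset.univ.filter fun i => θ i ≠ θb with hγdef
    have hγ : γ.card = k := ht
    refine (ciInf_le hΓbdd (⟨γ, hγ⟩ : {γ : Finset (Fin N) // γ.card = k})).trans ?_
    simp only
    rw [← Finset.sum_add_sum_compl γ (fun i => f i (θ i))]
    apply add_le_add
    · exact Finset.sum_le_sum fun s _ => ciInf_le (hIbdd s) (θ s)
    · refine (ciInf_le (hBbdd γ) θb).trans ?_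
      apply le_of_eq
      apply Finset.sum_congr rfl
      intro s hs
      have : θ s = θb := by
        simp only [hγdef, Finset.mem_compl, Finset.mem_filter, Finset.mem_univ,
          true_and, not_not] at hs
        exact hs
      rw [this]
  · -- RHS ≤ LHS
    apply le_ciInf
    rintro ⟨γ, hγ⟩
    simp only
    apply le_of_forall_sub_le
    intro ε hε
    rw [sub_le_iff_le_add]
    set ε' : ℝ := ε / (N + 1) with hε'def
    have hε' : 0 < ε' := by positivity
    -- choose near-optimal common parameter
    have hBlt : (⨅ θ0 : Fin m → ℝ, ∑ s ∈ γᶜ, f s θ0) <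
        (⨅ θ0 : Fin m → ℝ, ∑ s ∈ γᶜ, f s θ0) + ε' := lt_add_of_pos_right _ hε'
    obtain ⟨θ0, hθ0⟩ := exists_lt_of_ciInf_lt hBlt
    -- choose near-optimal individual parameters avoiding θ0
    have hchoice : ∀ s : Fin N, ∃ θ : Fin m → ℝ, θ ≠ θ0 ∧
        f s θ < (⨅ θ' : Fin m → ℝ, f s θ') + ε' :=
      fun s => exists_ne_lt hm (Y s) (Φ s) θ0 (lt_add_of_pos_right _ hε')
    choose θc hne hlt using hchoice
    set θ : Fin N → Fin m → ℝ := fun i => if i ∈ γ then θc i else θ0 with hθdef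
    have hfilter : (Finset.univ.filter fun i => θ i ≠ θ0) = γ := by
      ext i
      by_cases hi : i ∈ γ <;> simp [hθdef, hi, hne i]
    have hcard : (Finset.univ.filter fun i => θ i ≠ θ0).card = k := by rw [hfilter, hγ]
    refine (ciInf_le hTbdd ⟨(θ0, θ), hcard⟩).trans ?_
    simp only
    rw [← Finset.sum_add_sum_compl γ (fun i => f i (θ i))]
    have h1 : ∑ s ∈ γ, f s (θ s) ≤
        (∑ s ∈ γ, ⨅ θs : Fin m → ℝ, f s θs) + k * ε' := by
      have : ∑ s ∈ γ, f s (θ s) ≤ ∑ s ∈ γ, ((⨅ θ' : Fin m → ℝ, f s θ') + ε') := by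
        apply Finset.sum_le_sum
        intro s hs
        rw [hθdef]
        simp only [if_pos hs]
        exact (hlt s).le
      rw [Finset.sum_add_distrib, Finset.sum_const, hγ, nsmul_eq_mul] at this
      exact this
    have h2 : ∑ s ∈ γᶜ, f s (θ s) < (⨅ θ0 : Fin m → ℝ, ∑ s ∈ γᶜ, f s θ0) + ε' := by
      have heq : ∑ s ∈ γᶜ, f s (θ s) = ∑ s ∈ γᶜ, f s θ0 := by
        apply Finset.sum_congr rfl
        intro s hs
        rw [hθdef]
        simp only [if_neg (Finset.mem_compl.1 hs)]
      rw [heq]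
      exact hθ0
    have hkε : (k : ℝ) * ε' + ε' ≤ ε := by
      have hNk : (k : ℝ) + 1 ≤ (N : ℝ) + 1 := by
        have : (k : ℝ) ≤ N := by exact_mod_cast hkN
        linarith
      have : ((k : ℝ) + 1) * ε' ≤ ((N : ℝ) + 1) * ε' :=
        mul_le_mul_of_nonneg_right hNk hε'.le
      have hNe : ((N : ℝ) + 1) * ε' = ε := by
        rw [hε'def]
        field_simp
      nlinarith
    linarith
end

section
/- For every λ ≥ 0 and every p ∈ [1, ∞], the infimum of the function J(θ̄, θ₁, …, θ_N) = Σ_{i=1}^N ‖Yᵢ − Φᵢ θᵢ‖₂² + λ Σ_{i=1}^N ‖θ̄ − θᵢ‖_p over (θ̄, θ₁, …, θ_N) ∈ (ℝ^m)^{N+1} is attained; that is, the set of global minimizers of J is nonempty. -/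
open scoped BigOperators ENNReal

/-- The `ℓ_p` norm on `ℝ^m`, for `p ∈ [1, ∞]` (as an `ℝ≥0∞`-valued exponent). -/
noncomputable def pNorm (p : ℝ≥0∞) [Fact (1 ≤ p)] {m : ℕ} (v : Fin m → ℝ) : ℝ :=
  ‖(WithLp.equiv p (∀ _ : Fin m, ℝ)).symm v‖

/-- For every `λ ≥ 0` and every `p ∈ [1, ∞]`, the infimum of the sum-of-norms regularized
least-squares objective `J(θ̄, θ₁, …, θ_N) = Σᵢ ‖Yᵢ − Φᵢθᵢ‖₂² + λ Σᵢ ‖θ̄ − θᵢ‖_p` over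
`(ℝ^m)^{N+1}` is attained: the set of global minimizers is nonempty. -/
theorem sum_of_norms_objective_minimizer_exists
    (N Ω m : ℕ) (Y : Fin N → Fin Ω → ℝ) (Φ : Fin N → Matrix (Fin Ω) (Fin m) ℝ)
    (lam : ℝ) (hlam : 0 ≤ lam) (p : ℝ≥0∞) [Fact (1 ≤ p)] :
    ∃ t : (Fin m → ℝ) × (Fin N → Fin m → ℝ),
      ∀ t' : (Fin m → ℝ) × (Fin N → Fin m → ℝ),
        (∑ i, eNorm2 (Y i - (Φ i).mulVec (t.2 i)) ^ 2) +
            lam * ∑ i, pNorm p (t.1 - t.2 i) ≤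
          (∑ i, eNorm2 (Y i - (Φ i).mulVec (t'.2 i)) ^ 2) +
            lam * ∑ i, pNorm p (t'.1 - t'.2 i) := by
  classical
  -- the stacking linear map into a Euclidean space
  let W := EuclideanSpace ℝ (Fin N × Fin Ω)
  let stackL : (Fin N → Fin Ω → ℝ) →ₗ[ℝ] W :=
    { toFun := fun w => WithLp.toLp 2 (fun q : Fin N × Fin Ω => w q.1 q.2)
      map_add' := fun a b => rfl
      map_smul' := fun c a => rfl }
  have hstack : ∀ v : Fin N → Fin Ω → ℝ,
      (∑ i, eNorm2 (v i) ^ 2) = ‖stackL v‖ ^ 2 := by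
    intro v
    have h1 : ∀ i, eNorm2 (v i) ^ 2 = ∑ j, v i j ^ 2 := fun i =>
      Real.sq_sqrt (Finset.sum_nonneg fun j _ => sq_nonneg _)
    rw [EuclideanSpace.norm_eq,
      Real.sq_sqrt (Finset.sum_nonneg fun q _ => sq_nonneg _)]
    simp only [h1, Real.norm_eq_abs, sq_abs]
    rw [Fintype.sum_prod_type]
    rfl
  let B : (Fin N → Fin m → ℝ) →ₗ[ℝ] W :=
    stackL ∘ₗ LinearMap.pi (fun i => (Φ i).mulVecLin ∘ₗ LinearMap.proj i)
  let A : (Fin m → ℝ) →ₗ[ℝ] W := stackL ∘ₗ LinearMap.pi (fun i => (Φ i).mulVecLin)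
  have hB : ∀ θ : Fin N → Fin m → ℝ,
      B θ = stackL (fun i => (Φ i).mulVec (θ i)) := fun θ => rfl
  have hA : ∀ v : Fin m → ℝ, A v = stackL (fun i => (Φ i).mulVec v) := fun v => rfl
  rcases eq_or_lt_of_le hlam with hlam0 | hlampos
  · -- case lam = 0 : independent least squares
    have hR : IsClosed ((LinearMap.range B : Submodule ℝ W) : Set W) :=
      Submodule.closed_of_finiteDimensional _
    obtain ⟨w, hwmem, hw⟩ :=
      hR.exists_infDist_eq_dist ⟨0, Submodule.zero_mem _⟩ (stackL Y)
    obtain ⟨θ, hθ⟩ := LinearMap.mem_range.mp hwmem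
    refine ⟨(0, θ), ?_⟩
    intro t'
    rw [← hlam0]
    simp only [zero_mul, add_zero]
    have key : ∀ θ' : Fin N → Fin m → ℝ,
        stackL (fun i => Y i - (Φ i).mulVec (θ' i)) = stackL Y - B θ' := by
      intro θ'
      rw [hB, ← map_sub]
      rfl
    rw [hstack, hstack, key, key, hθ, ← dist_eq_norm, ← dist_eq_norm, ← hw]
    exact pow_le_pow_left₀ Metric.infDist_nonneg
      (Metric.infDist_le_dist_of_mem (LinearMap.mem_range_self B t'.2)) 2
  · -- case lam > 0
    set R : Set W := ((LinearMap.range A : Submodule ℝ W) : Set W) with hRdef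
    have hRclosed : IsClosed R := Submodule.closed_of_finiteDimensional _
    have hRne : R.Nonempty := ⟨0, Submodule.zero_mem _⟩
    let b : (Fin N → Fin m → ℝ) → W := fun δ => stackL Y + B δ
    have hbcont : Continuous b :=
      continuous_const.add B.continuous_of_finiteDimensional
    let G : (Fin N → Fin m → ℝ) → ℝ := fun δ =>
      Metric.infDist (b δ) R ^ 2 + lam * ∑ i, pNorm p (δ i)
    have hGcont : Continuous G := by
      apply Continuous.add
      · exact ((Metric.continuous_infDist_pt R).comp hbcont).pow 2
      · refine continuous_const.mul (continuous_finset_sum _ fun i _ => ?_)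
        simp only [pNorm]
        exact continuous_norm.comp
          ((PiLp.continuous_toLp _ _).comp (continuous_apply i))
    -- coercivity
    let T := PiLp 1 (fun _ : Fin N => PiLp p (fun _ : Fin m => ℝ))
    let e : (Fin N → Fin m → ℝ) ≃ₜ T :=
      (Homeomorph.piCongrRight (fun _ : Fin N =>
        (PiLp.continuousLinearEquiv p ℝ (fun _ : Fin m => ℝ)).symm.toHomeomorph)).trans
        (PiLp.continuousLinearEquiv 1 ℝ
          (fun _ : Fin N => PiLp p (fun _ : Fin m => ℝ))).symm.toHomeomorph
    have henorm : ∀ δ, ‖e δ‖ = ∑ i, pNorm p (δ i) := by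
      intro δ
      rw [PiLp.norm_eq_sum (by norm_num : (0:ℝ) < (1:ℝ≥0∞).toReal)]
      simp [pNorm]
      rfl
    have hcoer : Filter.Tendsto G (Filter.cocompact _) Filter.atTop := by
      apply Filter.tendsto_atTop_mono
        (f := fun δ => lam * ‖e δ‖) ?_
        (Filter.Tendsto.const_mul_atTop hlampos
          (tendsto_norm_cocompact_atTop.comp e.isClosedEmbedding.tendsto_cocompact))
      intro δ
      have h1 := sq_nonneg (Metric.infDist (b δ) R)
      have h2 : lam * ‖e δ‖ = lam * ∑ i, pNorm p (δ i) := by rw [henorm]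
      show lam * ‖e δ‖ ≤ Metric.infDist (b δ) R ^ 2 + lam * ∑ i, pNorm p (δ i)
      rw [h2]
      nlinarith [sq_nonneg (Metric.infDist (b δ) R)]
    obtain ⟨δs, hδs⟩ := hGcont.exists_forall_le hcoer
    obtain ⟨w, hwmem, hw⟩ := hRclosed.exists_infDist_eq_dist hRne (b δs)
    obtain ⟨θb, hθb⟩ := LinearMap.mem_range.mp hwmem
    -- key algebraic identity
    have hkey : ∀ (tb : Fin m → ℝ) (θ : Fin N → Fin m → ℝ),
        stackL (fun i => Y i - (Φ i).mulVec (θ i)) = b (fun i => tb - θ i) - A tb := by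
      intro tb θ
      show stackL _ = stackL Y + B _ - A tb
      rw [hB, hA, ← map_add, ← map_sub]
      congr 1
      funext i j
      simp only [Pi.add_apply, Pi.sub_apply, Matrix.mulVec_sub]
      ring
    refine ⟨(θb, fun i => θb - δs i), ?_⟩
    intro t'
    have hsubsub : (fun i => θb - (θb - δs i)) = δs := by funext i; simp
    have hval : (∑ i, eNorm2 (Y i - (Φ i).mulVec (θb - δs i)) ^ 2)
        + lam * ∑ i, pNorm p (θb - (θb - δs i)) = G δs := by
      have h1 : (∑ i, eNorm2 (Y i - (Φ i).mulVec (θb - δs i)) ^ 2)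
          = Metric.infDist (b δs) R ^ 2 := by
        rw [hstack, hkey θb (fun i => θb - δs i), hsubsub, hθb, ← dist_eq_norm, ← hw]
      have h2 : (∑ i, pNorm p (θb - (θb - δs i))) = ∑ i, pNorm p (δs i) := by
        refine Finset.sum_congr rfl fun i _ => ?_
        rw [sub_sub_cancel]
      rw [h1, h2]
    have hG' : G (fun i => t'.1 - t'.2 i) ≤
        (∑ i, eNorm2 (Y i - (Φ i).mulVec (t'.2 i)) ^ 2)
          + lam * ∑ i, pNorm p (t'.1 - t'.2 i) := by
      refine add_le_add ?_ le_rfl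
      rw [hstack, hkey t'.1 t'.2, ← dist_eq_norm]
      exact pow_le_pow_left₀ Metric.infDist_nonneg
        (Metric.infDist_le_dist_of_mem (LinearMap.mem_range_self A t'.1)) 2
    calc (∑ i, eNorm2 (Y i - (Φ i).mulVec ((θb, fun i => θb - δs i).2 i)) ^ 2)
          + lam * ∑ i, pNorm p ((θb, fun i => θb - δs i).1 - (θb, fun i => θb - δs i).2 i)
        = G δs := hval
      _ ≤ G (fun i => t'.1 - t'.2 i) := hδs _
      _ ≤ _ := hG'
end

section
/- Under the ADMM setup, the multiplier sequence converges to a dual optimal solution: there exist ν* ∈ ℝ^q and a global minimizer x* of f(x) = G₁(x) + G₂(Ax) such that (ν⁽ᵏ⁾) converges to ν* and for all x ∈ ℝⁿ and all z ∈ ℝ^q one has G₁(x*) + G₂(Ax*) ≤ G₁(x) + G₂(z) + ⟨ν*, Ax − z⟩; that is, (x*, Ax*) minimizes the Lagrangian L(x, z, ν*) = G₁(x) + G₂(z) + ⟨ν*, Ax − z⟩, so ν* is an optimal solution of the dual problem. -/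
open scoped BigOperators
open Matrix Filter

/-- Euclidean inner product on `ℝ^n`. -/
def edot {n : ℕ} (u v : Fin n → ℝ) : ℝ := ∑ i, u i * v i

namespace ADMMaux
variable {m : ℕ}

lemma edot_comm (u v : Fin m → ℝ) : edot u v = edot v u := by
  simp [edot, mul_comm]
lemma edot_add_left (u v w : Fin m → ℝ) : edot (u + v) w = edot u w + edot v w := by
  simp [edot, add_mul, Finset.sum_add_distrib]
lemma edot_sub_left (u v w : Fin m → ℝ) : edot (u - v) w = edot u w - edot v w := by
  simp [edot, sub_mul, Finset.sum_sub_distrib]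
lemma edot_smul_left (c : ℝ) (u v : Fin m → ℝ) : edot (c • u) v = c * edot u v := by
  simp [edot, Finset.mul_sum, mul_assoc]
lemma edot_add_right (u v w : Fin m → ℝ) : edot u (v + w) = edot u v + edot u w := by
  rw [edot_comm, edot_add_left, edot_comm v u, edot_comm w u]
lemma edot_sub_right (u v w : Fin m → ℝ) : edot u (v - w) = edot u v - edot u w := by
  rw [edot_comm, edot_sub_left, edot_comm v u, edot_comm w u]
lemma edot_smul_right (c : ℝ) (u v : Fin m → ℝ) : edot u (c • v) = c * edot u v := by
  rw [edot_comm, edot_smul_left, edot_comm v u]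
lemma edot_zero_right (u : Fin m → ℝ) : edot u 0 = 0 := by simp [edot]
lemma edot_self_nonneg (v : Fin m → ℝ) : 0 ≤ edot v v :=
  Finset.sum_nonneg fun i _ => mul_self_nonneg _
lemma eNorm2_sq (v : Fin m → ℝ) : eNorm2 v ^ 2 = edot v v := by
  rw [eNorm2, Real.sq_sqrt (Finset.sum_nonneg fun i _ => sq_nonneg _)]
  simp [edot, sq]

lemma edot_add_smul (u d : Fin m → ℝ) (t : ℝ) :
    edot (u + t • d) (u + t • d) = edot u u + 2 * t * edot u d + t ^ 2 * edot d d := by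
  rw [edot_add_left, edot_add_right, edot_add_right, edot_smul_left, edot_smul_right,
    edot_smul_left, edot_smul_right, edot_comm d u]
  ring

lemma norm_le_sqrt_edot (v : Fin m → ℝ) : ‖v‖ ≤ Real.sqrt (edot v v) := by
  rw [pi_norm_le_iff_of_nonneg (Real.sqrt_nonneg _)]
  intro i
  rw [Real.norm_eq_abs, ← Real.sqrt_sq_eq_abs]
  apply Real.sqrt_le_sqrt
  rw [sq]
  exact Finset.single_le_sum (f := fun j => v j * v j) (fun j _ => mul_self_nonneg _)
    (Finset.mem_univ i)

lemma edot_tendsto {u v : ℕ → Fin m → ℝ} {a b : Fin m → ℝ}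
    (hu : Tendsto u atTop (nhds a)) (hv : Tendsto v atTop (nhds b)) :
    Tendsto (fun k => edot (u k) (v k)) atTop (nhds (edot a b)) := by
  have hu' := tendsto_pi_nhds.1 hu
  have hv' := tendsto_pi_nhds.1 hv
  unfold edot
  exact tendsto_finset_sum _ fun i _ => (hu' i).mul (hv' i)

lemma tendsto_of_edot_tendsto_zero {u : ℕ → Fin m → ℝ} {a : Fin m → ℝ}
    (h : Tendsto (fun k => edot (u k - a) (u k - a)) atTop (nhds 0)) :
    Tendsto u atTop (nhds a) := by
  rw [tendsto_iff_norm_sub_tendsto_zero]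
  have hs : Tendsto (fun k => Real.sqrt (edot (u k - a) (u k - a))) atTop (nhds 0) := by
    have := (Real.continuous_sqrt.tendsto 0).comp h
    simpa [Function.comp_def] using this
  refine squeeze_zero (fun k => norm_nonneg _) (fun k => norm_le_sqrt_edot _) hs

lemma continuous_mulVec {p : ℕ} (B : Matrix (Fin p) (Fin m) ℝ) :
    Continuous fun v : Fin m → ℝ => B.mulVec v := by
  refine continuous_pi fun i => ?_
  simp only [Matrix.mulVec, dotProduct]
  exact continuous_finset_sum _ fun j _ => (continuous_const.mul (continuous_apply j))

lemma le_of_le_add_small {L R C : ℝ} (hC : 0 ≤ C)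
    (h : ∀ t : ℝ, 0 < t → t ≤ 1 → L ≤ R + t * C) : L ≤ R := by
  refine le_of_forall_pos_le_add fun ε hε => ?_
  have ht0 : 0 < min 1 (ε / (C + 1)) := lt_min one_pos (div_pos hε (by linarith))
  have := h _ ht0 (min_le_left _ _)
  have hle : min 1 (ε / (C + 1)) * C ≤ ε := by
    have h1 : min 1 (ε / (C + 1)) * C ≤ (ε / (C + 1)) * C :=
      mul_le_mul_of_nonneg_right (min_le_right _ _) hC
    have h2 : (ε / (C + 1)) * C ≤ ε := by
      rw [div_mul_eq_mul_div, div_le_iff₀ (by linarith)]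
      nlinarith
    linarith
  linarith

lemma subgrad_of_min_z {F : (Fin m → ℝ) → ℝ} (hF : ConvexOn ℝ Set.univ F)
    {ρ : ℝ} (hρ : 0 < ρ) (ν a z₀ : Fin m → ℝ)
    (hmin : ∀ w, F z₀ - edot ν z₀ + (ρ/2) * edot (a - z₀) (a - z₀) ≤
      F w - edot ν w + (ρ/2) * edot (a - w) (a - w)) :
    ∀ w, F z₀ + edot (ν + ρ • (a - z₀)) (w - z₀) ≤ F w := by
  intro w
  set d : Fin m → ℝ := w - z₀ with hd
  have key : ∀ t : ℝ, 0 < t → t ≤ 1 →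
      F z₀ + edot (ν + ρ • (a - z₀)) d ≤ F w + t * ((ρ/2) * edot d d) := by
    intro t ht0 ht1
    have hwt := hmin (z₀ + t • d)
    have hconv : F (z₀ + t • d) ≤ (1 - t) * F z₀ + t * F w := by
      have hcomb : z₀ + t • d = (1 - t) • z₀ + t • w := by
        funext i; simp [hd, Pi.sub_apply, Pi.smul_apply, smul_eq_mul]; ring
      rw [hcomb]
      have := hF.2 (Set.mem_univ z₀) (Set.mem_univ w) (by linarith : (0:ℝ) ≤ 1 - t)
        (le_of_lt ht0) (by ring)
      simpa using this
    have hlin : edot ν (z₀ + t • d) = edot ν z₀ + t * edot ν d := by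
      rw [edot_add_right, edot_smul_right]
    have hquad : edot (a - (z₀ + t • d)) (a - (z₀ + t • d)) =
        edot (a - z₀) (a - z₀) + 2 * (-t) * edot (a - z₀) d + (-t) ^ 2 * edot d d := by
      have h1 : a - (z₀ + t • d) = (a - z₀) + (-t) • d := by
        funext i; simp [Pi.sub_apply, Pi.add_apply, Pi.smul_apply, smul_eq_mul]; ring
      rw [h1, edot_add_smul]
    have hexp : edot (ν + ρ • (a - z₀)) d = edot ν d + ρ * edot (a - z₀) d := by
      rw [edot_add_left, edot_smul_left]
    have h3 : t * (F z₀ + edot (ν + ρ • (a - z₀)) d) ≤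
        t * (F w + t * ((ρ/2) * edot d d)) := by
      rw [hlin, hquad] at hwt
      rw [hexp]; nlinarith
    have := (mul_le_mul_iff_right₀ ht0).1 h3
    linarith
  have hC : 0 ≤ (ρ/2) * edot d d := mul_nonneg (by linarith) (edot_self_nonneg d)
  exact le_of_le_add_small hC key

lemma subgrad_of_min_x {p : ℕ} {F : (Fin p → ℝ) → ℝ} (hF : ConvexOn ℝ Set.univ F)
    {ρ : ℝ} (hρ : 0 < ρ) (A : Matrix (Fin m) (Fin p) ℝ) (ν zk : Fin m → ℝ) (x₀ : Fin p → ℝ)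
    (hmin : ∀ y, F x₀ + edot ν (A.mulVec x₀) +
        (ρ/2) * edot (A.mulVec x₀ - zk) (A.mulVec x₀ - zk) ≤
      F y + edot ν (A.mulVec y) + (ρ/2) * edot (A.mulVec y - zk) (A.mulVec y - zk)) :
    ∀ y, F x₀ ≤ F y + edot (ν + ρ • (A.mulVec x₀ - zk)) (A.mulVec y - A.mulVec x₀) := by
  intro y
  set d : Fin p → ℝ := y - x₀ with hd
  set e : Fin m → ℝ := A.mulVec y - A.mulVec x₀ with he
  have hAd : A.mulVec d = e := by rw [hd, he, Matrix.mulVec_sub]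
  have key : ∀ t : ℝ, 0 < t → t ≤ 1 →
      F x₀ ≤ F y + edot (ν + ρ • (A.mulVec x₀ - zk)) e + t * ((ρ/2) * edot e e) := by
    intro t ht0 ht1
    have hwt := hmin (x₀ + t • d)
    have hAe : A.mulVec (x₀ + t • d) = A.mulVec x₀ + t • e := by
      rw [Matrix.mulVec_add, Matrix.mulVec_smul, hAd]
    have hconv : F (x₀ + t • d) ≤ (1 - t) * F x₀ + t * F y := by
      have hcomb : x₀ + t • d = (1 - t) • x₀ + t • y := by
        funext i; simp [hd, Pi.sub_apply, Pi.smul_apply, smul_eq_mul]; ring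
      rw [hcomb]
      have := hF.2 (Set.mem_univ x₀) (Set.mem_univ y) (by linarith : (0:ℝ) ≤ 1 - t)
        (le_of_lt ht0) (by ring)
      simpa using this
    have hlin : edot ν (A.mulVec x₀ + t • e) = edot ν (A.mulVec x₀) + t * edot ν e := by
      rw [edot_add_right, edot_smul_right]
    have hquad : edot (A.mulVec x₀ + t • e - zk) (A.mulVec x₀ + t • e - zk) =
        edot (A.mulVec x₀ - zk) (A.mulVec x₀ - zk) + 2 * t * edot (A.mulVec x₀ - zk) e +
          t ^ 2 * edot e e := by
      have h1 : A.mulVec x₀ + t • e - zk = (A.mulVec x₀ - zk) + t • e := by abel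
      rw [h1, edot_add_smul]
    have hexp : edot (ν + ρ • (A.mulVec x₀ - zk)) e =
        edot ν e + ρ * edot (A.mulVec x₀ - zk) e := by
      rw [edot_add_left, edot_smul_left]
    rw [hAe, hlin, hquad] at hwt
    have h3 : t * F x₀ ≤
        t * (F y + edot (ν + ρ • (A.mulVec x₀ - zk)) e + t * ((ρ/2) * edot e e)) := by
      rw [hexp]; nlinarith
    have := (mul_le_mul_iff_right₀ ht0).1 h3
    linarith
  have hC : 0 ≤ (ρ/2) * edot e e := mul_nonneg (by linarith) (edot_self_nonneg e)
  exact le_of_le_add_small hC key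

lemma lyapunov_step {ρ : ℝ} (hρ : 0 < ρ) (ν₁ νs r z₁ z₂ zs : Fin m → ℝ)
    (hC : edot (ν₁ + ρ • r - νs) r + ρ * edot (z₂ - z₁) (z₂ + r - zs) ≤ 0)
    (hM : 0 ≤ edot (z₂ - z₁) r) :
    (1/ρ) * edot (ν₁ + ρ • r - νs) (ν₁ + ρ • r - νs) + ρ * edot (z₂ - zs) (z₂ - zs) +
      ρ * edot r r + ρ * edot (z₂ - z₁) (z₂ - z₁) ≤
    (1/ρ) * edot (ν₁ - νs) (ν₁ - νs) + ρ * edot (z₁ - zs) (z₁ - zs) := by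
  have hid : (1/ρ) * edot (ν₁ + ρ • r - νs) (ν₁ + ρ • r - νs) + ρ * edot (z₂ - zs) (z₂ - zs) +
      ρ * edot r r + ρ * edot (z₂ - z₁) (z₂ - z₁)
      = (1/ρ) * edot (ν₁ - νs) (ν₁ - νs) + ρ * edot (z₁ - zs) (z₁ - zs) +
        2 * (edot (ν₁ + ρ • r - νs) r + ρ * edot (z₂ - z₁) (z₂ + r - zs)) -
        2 * ρ * edot (z₂ - z₁) r := by
    simp only [edot, Pi.add_apply, Pi.sub_apply, Pi.smul_apply, smul_eq_mul, Finset.mul_sum,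
      ← Finset.sum_add_distrib, ← Finset.sum_sub_distrib]
    refine Finset.sum_congr rfl fun i _ => ?_
    field_simp
    ring
  have h1 : 0 ≤ ρ * edot (z₂ - z₁) r := mul_nonneg hρ.le hM
  linarith

set_option maxHeartbeats 1000000 in
lemma saddle_exists {n q : ℕ}
    (G₁ : (Fin n → ℝ) → ℝ) (G₂ : (Fin q → ℝ) → ℝ)
    (hG₁conv : ConvexOn ℝ Set.univ G₁)
    (hG₂conv : ConvexOn ℝ Set.univ G₂) (hG₂cont : Continuous G₂)
    (A : Matrix (Fin q) (Fin n) ℝ)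
    (x₀ : Fin n → ℝ) (hx₀ : ∀ y, G₁ x₀ + G₂ (A.mulVec x₀) ≤ G₁ y + G₂ (A.mulVec y)) :
    ∃ νs : Fin q → ℝ, ∀ (x' : Fin n → ℝ) (z' : Fin q → ℝ),
      G₁ x₀ + G₂ (A.mulVec x₀) ≤ G₁ x' + G₂ z' + edot νs (A.mulVec x' - z') := by
  classical
  set pstar := G₁ x₀ + G₂ (A.mulVec x₀) with hp
  set S : Set ((Fin q → ℝ) × ℝ) :=
    {p | ∃ x : Fin n → ℝ, G₁ x + G₂ (A.mulVec x - p.1) < p.2} with hS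
  have hSopen : IsOpen S := by
    have : S = ⋃ x : Fin n → ℝ, {p : (Fin q → ℝ) × ℝ | G₁ x + G₂ (A.mulVec x - p.1) < p.2} := by
      ext p; simp [hS, Set.mem_iUnion]
    rw [this]
    refine isOpen_iUnion fun x => ?_
    exact isOpen_lt (continuous_const.add (hG₂cont.comp (continuous_const.sub continuous_fst)))
      continuous_snd
  have hSconv : Convex ℝ S := by
    rintro ⟨u₁, t₁⟩ ⟨x₁, hx₁⟩ ⟨u₂, t₂⟩ ⟨x₂, hx₂⟩ a b ha hb hab
    refine ⟨a • x₁ + b • x₂, ?_⟩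
    have hG1 : G₁ (a • x₁ + b • x₂) ≤ a * G₁ x₁ + b * G₁ x₂ := by
      have := hG₁conv.2 (Set.mem_univ x₁) (Set.mem_univ x₂) ha hb hab
      simpa using this
    have harg : A.mulVec (a • x₁ + b • x₂) - (a • (u₁, t₁) + b • (u₂, t₂)).1 =
        a • (A.mulVec x₁ - u₁) + b • (A.mulVec x₂ - u₂) := by
      simp only [Matrix.mulVec_add, Matrix.mulVec_smul, Prod.smul_fst, Prod.fst_add]
      funext i
      simp [Pi.smul_apply, smul_eq_mul]
      ring
    have hG2 : G₂ (A.mulVec (a • x₁ + b • x₂) - (a • (u₁, t₁) + b • (u₂, t₂)).1) ≤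
        a * G₂ (A.mulVec x₁ - u₁) + b * G₂ (A.mulVec x₂ - u₂) := by
      rw [harg]
      have := hG₂conv.2 (Set.mem_univ (A.mulVec x₁ - u₁)) (Set.mem_univ (A.mulVec x₂ - u₂))
        ha hb hab
      simpa using this
    have hsnd : (a • (u₁, t₁) + b • (u₂, t₂)).2 = a * t₁ + b * t₂ := by
      simp [Prod.smul_snd, smul_eq_mul]
    rw [hsnd]
    rcases ha.lt_or_eq with hapos | ha0
    · have e1 : a * (G₁ x₁ + G₂ (A.mulVec x₁ - u₁)) < a * t₁ :=
        (mul_lt_mul_iff_right₀ hapos).2 hx₁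
      have e2 : b * (G₂ (A.mulVec x₂ - u₂) + G₁ x₂) ≤ b * t₂ :=
        mul_le_mul_of_nonneg_left (by simpa [add_comm] using hx₂.le) hb
      nlinarith
    · have hb1 : b = 1 := by linarith
      have e2 : b * (G₂ (A.mulVec x₂ - u₂) + G₁ x₂) < b * t₂ := by
        rw [hb1]; simpa [add_comm] using hx₂
      have e1 : a * (G₁ x₁ + G₂ (A.mulVec x₁ - u₁)) ≤ a * t₁ := by rw [← ha0]; simp
      nlinarith
  obtain ⟨f, hf⟩ := geometric_hahn_banach_open_point hSconv hSopen
    (show ((0 : Fin q → ℝ), pstar) ∉ S by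
      rintro ⟨xw, hxw⟩
      simp only [sub_zero] at hxw
      exact absurd (hx₀ xw) (not_le.2 hxw))
  set c : ℝ := f (0, 1) with hc
  set φ : (Fin q → ℝ) →L[ℝ] ℝ := f.comp (ContinuousLinearMap.inl ℝ (Fin q → ℝ) ℝ) with hφ
  have hφapp : ∀ u : Fin q → ℝ, φ u = f (u, 0) := fun u => rfl
  have hsplit : ∀ (u : Fin q → ℝ) (t : ℝ), f (u, t) = φ u + t * c := by
    intro u t
    have h1 : (u, t) = (u, (0:ℝ)) + t • ((0 : Fin q → ℝ), (1:ℝ)) := by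
      simp [Prod.ext_iff]
    rw [h1, map_add, f.map_smul, smul_eq_mul, hφapp]
  have hφ0 : φ 0 = 0 := map_zero φ
  have hmem : ∀ (x' : Fin n → ℝ) (z' : Fin q → ℝ) (ε : ℝ), 0 < ε →
      ((A.mulVec x' - z'), G₁ x' + G₂ z' + ε) ∈ S := by
    intro x' z' ε hε
    refine ⟨x', ?_⟩
    show G₁ x' + G₂ (A.mulVec x' - (A.mulVec x' - z')) < G₁ x' + G₂ z' + ε
    have h2 : A.mulVec x' - (A.mulVec x' - z') = z' := by abel
    rw [h2]
    linarith
  have hineq : ∀ (x' : Fin n → ℝ) (z' : Fin q → ℝ) (ε : ℝ), 0 < ε →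
      φ (A.mulVec x' - z') + (G₁ x' + G₂ z' + ε) * c < pstar * c := by
    intro x' z' ε hε
    have h3 := hf _ (hmem x' z' ε hε)
    rw [hsplit, hsplit] at h3
    rw [hφ0] at h3
    linarith
  have hcneg : c < 0 := by
    have h1 := hineq x₀ (A.mulVec x₀) 1 one_pos
    have h0 : A.mulVec x₀ - A.mulVec x₀ = (0 : Fin q → ℝ) := by abel
    rw [h0, hφ0] at h1
    nlinarith [h1]
  have hc0 : c ≠ 0 := ne_of_lt hcneg
  refine ⟨fun i => φ (Pi.single i 1) / c, ?_⟩
  intro x' z'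
  have hrep : ∀ u : Fin q → ℝ, edot (fun i => φ (Pi.single i 1) / c) u = φ u / c := by
    intro u
    have hu : u = ∑ i : Fin q, u i • (Pi.single i 1 : Fin q → ℝ) := by
      funext j
      simp [Finset.sum_apply, Pi.single_apply]
    have hφu : φ u = ∑ i : Fin q, u i * φ (Pi.single i 1 : Fin q → ℝ) := by
      conv_lhs => rw [hu]
      rw [map_sum]
      refine Finset.sum_congr rfl fun i _ => ?_
      rw [φ.map_smul, smul_eq_mul]
    rw [hφu, Finset.sum_div, edot]
    refine Finset.sum_congr rfl fun i _ => ?_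
    rw [div_mul_eq_mul_div, mul_comm]
  set u : Fin q → ℝ := A.mulVec x' - z' with hudef
  set s : ℝ := G₁ x' + G₂ z' with hs
  set g : ℝ := φ u / c with hg
  have hgc : φ u = g * c := by rw [hg, div_mul_cancel₀ _ hc0]
  have h5 : ∀ ε' : ℝ, 0 < ε' → φ u + s * c ≤ pstar * c + ε' := by
    intro ε' hε'
    have hεpos : 0 < ε' / (-c) := div_pos hε' (by linarith)
    have h6 := hineq x' z' (ε' / (-c)) hεpos
    have hεc : (ε' / (-c)) * c = -ε' := by
      field_simp
    rw [← hs, ← hudef] at h6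
    nlinarith [h6]
  have h6 : φ u + s * c ≤ pstar * c := le_of_forall_pos_le_add h5
  rw [hgc] at h6
  rw [hrep u, ← hg]
  by_contra hcon
  push_neg at hcon
  nlinarith [mul_pos (sub_pos.2 hcon) (neg_pos.2 hcneg)]

end ADMMaux

set_option maxHeartbeats 2000000 in
/-- ADMM dual convergence: under the ADMM setup (convex continuous `G₁, G₂`, `AᵀA`
invertible, the set of minimizers of `f(x) = G₁(x) + G₂(Ax)` nonempty, `ρ > 0`, and
sequences generated by the ADMM iteration), there exist `ν*` and a global minimizer `x*`
of `f` such that `ν⁽ᵏ⁾ → ν*` and `(x*, Ax*)` minimizes the Lagrangian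
`L(x, z, ν*) = G₁(x) + G₂(z) + ⟨ν*, Ax − z⟩`, i.e. `ν*` is dual optimal. -/
theorem admm_dual_convergence
    (n q : ℕ) (hn : 0 < n) (hq : 0 < q)
    (G₁ : (Fin n → ℝ) → ℝ) (G₂ : (Fin q → ℝ) → ℝ)
    (hG₁conv : ConvexOn ℝ Set.univ G₁) (hG₁cont : Continuous G₁)
    (hG₂conv : ConvexOn ℝ Set.univ G₂) (hG₂cont : Continuous G₂)
    (A : Matrix (Fin q) (Fin n) ℝ) (hA : IsUnit (Aᵀ * A))
    (hexists : ∃ x0 : Fin n → ℝ, ∀ y : Fin n → ℝ,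
      G₁ x0 + G₂ (A.mulVec x0) ≤ G₁ y + G₂ (A.mulVec y))
    (ρ : ℝ) (hρ : 0 < ρ)
    (x : ℕ → Fin n → ℝ) (z ν : ℕ → Fin q → ℝ)
    (hx : ∀ k, ∀ y : Fin n → ℝ,
      G₁ (x (k+1)) + edot (ν k) (A.mulVec (x (k+1))) +
          (ρ/2) * eNorm2 (A.mulVec (x (k+1)) - z k) ^ 2 ≤
        G₁ y + edot (ν k) (A.mulVec y) + (ρ/2) * eNorm2 (A.mulVec y - z k) ^ 2)
    (hz : ∀ k, ∀ w : Fin q → ℝ,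
      G₂ (z (k+1)) - edot (ν k) (z (k+1)) +
          (ρ/2) * eNorm2 (A.mulVec (x (k+1)) - z (k+1)) ^ 2 ≤
        G₂ w - edot (ν k) w + (ρ/2) * eNorm2 (A.mulVec (x (k+1)) - w) ^ 2)
    (hν : ∀ k, ν (k+1) = ν k + ρ • (A.mulVec (x (k+1)) - z (k+1))) :
    ∃ (νstar : Fin q → ℝ) (xstar : Fin n → ℝ),
      (∀ y : Fin n → ℝ, G₁ xstar + G₂ (A.mulVec xstar) ≤ G₁ y + G₂ (A.mulVec y)) ∧
      Tendsto ν atTop (nhds νstar) ∧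
      ∀ (x' : Fin n → ℝ) (z' : Fin q → ℝ),
        G₁ xstar + G₂ (A.mulVec xstar) ≤
          G₁ x' + G₂ z' + edot νstar (A.mulVec x' - z') := by
  classical
  open ADMMaux in
  obtain ⟨x₀, hx₀⟩ := hexists
  obtain ⟨νs, hνs⟩ := ADMMaux.saddle_exists G₁ G₂ hG₁conv hG₂conv hG₂cont A x₀ hx₀
  -- rewrite the minimization hypotheses with `edot`
  have hxe : ∀ k, ∀ y : Fin n → ℝ,
      G₁ (x (k+1)) + edot (ν k) (A.mulVec (x (k+1))) +
          (ρ/2) * edot (A.mulVec (x (k+1)) - z k) (A.mulVec (x (k+1)) - z k) ≤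
        G₁ y + edot (ν k) (A.mulVec y) + (ρ/2) * edot (A.mulVec y - z k) (A.mulVec y - z k) := by
    intro k y
    have := hx k y
    rwa [ADMMaux.eNorm2_sq, ADMMaux.eNorm2_sq] at this
  have hze : ∀ k, ∀ w : Fin q → ℝ,
      G₂ (z (k+1)) - edot (ν k) (z (k+1)) +
          (ρ/2) * edot (A.mulVec (x (k+1)) - z (k+1)) (A.mulVec (x (k+1)) - z (k+1)) ≤
        G₂ w - edot (ν k) w + (ρ/2) * edot (A.mulVec (x (k+1)) - w) (A.mulVec (x (k+1)) - w) := by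
    intro k w
    have := hz k w
    rwa [ADMMaux.eNorm2_sq, ADMMaux.eNorm2_sq] at this
  -- subgradient inequalities
  have L1 : ∀ k, ∀ w : Fin q → ℝ,
      G₂ (z (k+1)) + edot (ν (k+1)) (w - z (k+1)) ≤ G₂ w := by
    intro k w
    have := ADMMaux.subgrad_of_min_z hG₂conv hρ (ν k) (A.mulVec (x (k+1))) (z (k+1))
      (hze k) w
    rwa [← hν k] at this
  have hsid : ∀ k, ν k + ρ • (A.mulVec (x (k+1)) - z k) =
      ν (k+1) + ρ • (z (k+1) - z k) := by
    intro k
    rw [hν k]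
    funext i
    simp only [Pi.add_apply, Pi.smul_apply, Pi.sub_apply, smul_eq_mul]
    ring
  have L2 : ∀ k, ∀ y : Fin n → ℝ,
      G₁ (x (k+1)) ≤ G₁ y + edot (ν (k+1) + ρ • (z (k+1) - z k))
        (A.mulVec y - A.mulVec (x (k+1))) := by
    intro k y
    have := ADMMaux.subgrad_of_min_x hG₁conv hρ A (ν k) (z k) (x (k+1)) (hxe k) y
    rwa [hsid k] at this
  -- monotonicity cross term
  have L3 : ∀ k, 0 ≤ edot (z (k+2) - z (k+1)) (A.mulVec (x (k+2)) - z (k+2)) := by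
    intro k
    have h1 := L1 k (z (k+2))
    have h2 := L1 (k+1) (z (k+1))
    have hsub : edot (ν (k+2)) (z (k+1) - z (k+2)) =
        - edot (ν (k+2)) (z (k+2) - z (k+1)) := by
      rw [ADMMaux.edot_sub_right, ADMMaux.edot_sub_right]; ring
    rw [hsub] at h2
    have h3 : edot (ν (k+1)) (z (k+2) - z (k+1)) ≤ edot (ν (k+2)) (z (k+2) - z (k+1)) := by
      linarith
    have h4 : edot (ν (k+2) - ν (k+1)) (z (k+2) - z (k+1)) =
        ρ * edot (A.mulVec (x (k+2)) - z (k+2)) (z (k+2) - z (k+1)) := by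
      rw [show ν (k+2) - ν (k+1) = ρ • (A.mulVec (x (k+2)) - z (k+2)) by
        rw [hν (k+1)]; abel, ADMMaux.edot_smul_left]
    have h5 : 0 ≤ edot (ν (k+2) - ν (k+1)) (z (k+2) - z (k+1)) := by
      rw [ADMMaux.edot_sub_left]; linarith
    rw [h4] at h5
    have h6 : 0 ≤ edot (A.mulVec (x (k+2)) - z (k+2)) (z (k+2) - z (k+1)) :=
      nonneg_of_mul_nonneg_right h5 hρ
    rwa [ADMMaux.edot_comm] at h6
    -- Lyapunov descent for any saddle pair
  have lyap : ∀ (νp : Fin q → ℝ) (xp : Fin n → ℝ),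
      (∀ (x' : Fin n → ℝ) (z' : Fin q → ℝ),
        G₁ xp + G₂ (A.mulVec xp) ≤ G₁ x' + G₂ z' + edot νp (A.mulVec x' - z')) →
      ∀ k, (1/ρ) * edot (ν (k+2) - νp) (ν (k+2) - νp) +
          ρ * edot (z (k+2) - A.mulVec xp) (z (k+2) - A.mulVec xp) +
          ρ * edot (A.mulVec (x (k+2)) - z (k+2)) (A.mulVec (x (k+2)) - z (k+2)) +
          ρ * edot (z (k+2) - z (k+1)) (z (k+2) - z (k+1)) ≤
        (1/ρ) * edot (ν (k+1) - νp) (ν (k+1) - νp) +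
          ρ * edot (z (k+1) - A.mulVec xp) (z (k+1) - A.mulVec xp) := by
    intro νp xp hsad k
    set r : Fin q → ℝ := A.mulVec (x (k+2)) - z (k+2) with hr
    have hν2 : ν (k+2) = ν (k+1) + ρ • r := hν (k+1)
    have e1 := L1 (k+1) (A.mulVec xp)
    have e2 := L2 (k+1) xp
    have e3 := hsad (x (k+2)) (z (k+2))
    have hidC : edot (ν (k+2)) (A.mulVec xp - z (k+2))
        - edot (ν (k+2) + ρ • (z (k+2) - z (k+1))) (A.mulVec xp - A.mulVec (x (k+2)))
        - edot νp (A.mulVec (x (k+2)) - z (k+2))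
        = edot (ν (k+2) - νp) r +
          ρ * edot (z (k+2) - z (k+1)) (z (k+2) + r - A.mulVec xp) := by
      rw [hr]
      simp only [edot, Pi.add_apply, Pi.sub_apply, Pi.smul_apply, smul_eq_mul, Finset.mul_sum,
        ← Finset.sum_add_distrib, ← Finset.sum_sub_distrib]
      refine Finset.sum_congr rfl fun i _ => ?_
      ring
    have hC : edot (ν (k+1) + ρ • r - νp) r +
        ρ * edot (z (k+2) - z (k+1)) (z (k+2) + r - A.mulVec xp) ≤ 0 := by
      rw [← hν2]
      linarith
    have hM : 0 ≤ edot (z (k+2) - z (k+1)) r := L3 k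
    have := ADMMaux.lyapunov_step hρ (ν (k+1)) νp r (z (k+1)) (z (k+2)) (A.mulVec xp) hC hM
    rwa [← hν2] at this
  -- monotonicity of the Lyapunov function
  have hmono : ∀ (νp : Fin q → ℝ) (xp : Fin n → ℝ),
      (∀ (x' : Fin n → ℝ) (z' : Fin q → ℝ),
        G₁ xp + G₂ (A.mulVec xp) ≤ G₁ x' + G₂ z' + edot νp (A.mulVec x' - z')) →
      ∀ a b : ℕ, a ≤ b →
        (1/ρ) * edot (ν (b+1) - νp) (ν (b+1) - νp) +
          ρ * edot (z (b+1) - A.mulVec xp) (z (b+1) - A.mulVec xp) ≤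
        (1/ρ) * edot (ν (a+1) - νp) (ν (a+1) - νp) +
          ρ * edot (z (a+1) - A.mulVec xp) (z (a+1) - A.mulVec xp) := by
    intro νp xp hsad a b hab
    induction b, hab using Nat.le_induction with
    | base => exact le_refl _
    | succ b hab ih =>
      show (1/ρ) * edot (ν (b+2) - νp) (ν (b+2) - νp) +
          ρ * edot (z (b+2) - A.mulVec xp) (z (b+2) - A.mulVec xp) ≤ _
      have hstep := lyap νp xp hsad b
      have h1 := ADMMaux.edot_self_nonneg (A.mulVec (x (b+2)) - z (b+2))
      have h2 := ADMMaux.edot_self_nonneg (z (b+2) - z (b+1))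
      have h3 : 0 ≤ ρ * edot (A.mulVec (x (b+2)) - z (b+2)) (A.mulVec (x (b+2)) - z (b+2)) :=
        mul_nonneg hρ.le h1
      have h4 : 0 ≤ ρ * edot (z (b+2) - z (b+1)) (z (b+2) - z (b+1)) := mul_nonneg hρ.le h2
      linarith
  -- apply with the separating saddle point (νs, x₀)
  set V : ℕ → ℝ := fun k => (1/ρ) * edot (ν k - νs) (ν k - νs) +
    ρ * edot (z k - A.mulVec x₀) (z k - A.mulVec x₀) with hV
  have hVnonneg : ∀ k, 0 ≤ V k := by
    intro k
    have h1 := ADMMaux.edot_self_nonneg (ν k - νs)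
    have h2 := ADMMaux.edot_self_nonneg (z k - A.mulVec x₀)
    have : 0 < 1/ρ := by positivity
    have := mul_nonneg this.le h1
    have := mul_nonneg hρ.le h2
    simp only [hV]
    linarith
  have hVbound : ∀ k, V (k+1) ≤ V 1 := fun k => hmono νs x₀ hνs 0 k (Nat.zero_le k)
  -- residual convergence
  set c : ℕ → ℝ := fun k =>
    ρ * edot (A.mulVec (x (k+2)) - z (k+2)) (A.mulVec (x (k+2)) - z (k+2)) +
    ρ * edot (z (k+2) - z (k+1)) (z (k+2) - z (k+1)) with hcdef
  have hcnonneg : ∀ k, 0 ≤ c k := by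
    intro k
    have h1 := mul_nonneg hρ.le (ADMMaux.edot_self_nonneg (A.mulVec (x (k+2)) - z (k+2)))
    have h2 := mul_nonneg hρ.le (ADMMaux.edot_self_nonneg (z (k+2) - z (k+1)))
    simp only [hcdef]
    linarith
  have hcle : ∀ k, c k ≤ V (k+1) - V (k+2) := by
    intro k
    have := lyap νs x₀ hνs k
    simp only [hV, hcdef]
    linarith
  have hpartial : ∀ K, ∑ i ∈ Finset.range K, c i ≤ V 1 := by
    intro K
    have h1 : ∑ i ∈ Finset.range K, c i ≤
        ∑ i ∈ Finset.range K, (V (i+1) - V (i+1+1)) := by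
      refine Finset.sum_le_sum fun i _ => ?_
      have := hcle i
      linarith
    have h2 : ∑ i ∈ Finset.range K, (V (i+1) - V (i+1+1)) = V 1 - V (K+1) :=
      Finset.sum_range_sub' (fun i => V (i+1)) K
    have h3 := hVnonneg (K+1)
    linarith
  have hsummable : Summable c := summable_of_sum_range_le hcnonneg hpartial
  have hc0 : Tendsto c atTop (nhds 0) := hsummable.tendsto_atTop_zero
  have hDr : Tendsto (fun k => edot (A.mulVec (x (k+2)) - z (k+2))
      (A.mulVec (x (k+2)) - z (k+2))) atTop (nhds 0) := by
    refine squeeze_zero (g := fun k => (1/ρ) * c k)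
      (fun k => ADMMaux.edot_self_nonneg _) (fun k => ?_) ?_
    · show edot (A.mulVec (x (k+2)) - z (k+2)) (A.mulVec (x (k+2)) - z (k+2)) ≤ (1/ρ) * c k
      have h2 := mul_nonneg hρ.le (ADMMaux.edot_self_nonneg (z (k+2) - z (k+1)))
      have hck : c k = ρ * edot (A.mulVec (x (k+2)) - z (k+2)) (A.mulVec (x (k+2)) - z (k+2)) +
          ρ * edot (z (k+2) - z (k+1)) (z (k+2) - z (k+1)) := rfl
      rw [hck]
      rw [mul_add, ← mul_assoc, one_div_mul_cancel hρ.ne', one_mul]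
      have := mul_nonneg (le_of_lt (by positivity : (0:ℝ) < 1/ρ)) h2
      linarith
    · have := hc0.const_mul (1/ρ)
      simpa using this
  have hDΔ : Tendsto (fun k => edot (z (k+2) - z (k+1)) (z (k+2) - z (k+1))) atTop (nhds 0) := by
    refine squeeze_zero (g := fun k => (1/ρ) * c k)
      (fun k => ADMMaux.edot_self_nonneg _) (fun k => ?_) ?_
    · show edot (z (k+2) - z (k+1)) (z (k+2) - z (k+1)) ≤ (1/ρ) * c k
      have h2 := mul_nonneg hρ.le
        (ADMMaux.edot_self_nonneg (A.mulVec (x (k+2)) - z (k+2)))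
      have hck : c k = ρ * edot (A.mulVec (x (k+2)) - z (k+2)) (A.mulVec (x (k+2)) - z (k+2)) +
          ρ * edot (z (k+2) - z (k+1)) (z (k+2) - z (k+1)) := rfl
      rw [hck]
      rw [mul_add]
      have e1 : 1/ρ * (ρ * edot (z (k+2) - z (k+1)) (z (k+2) - z (k+1))) =
          edot (z (k+2) - z (k+1)) (z (k+2) - z (k+1)) := by
        field_simp
      have := mul_nonneg (le_of_lt (by positivity : (0:ℝ) < 1/ρ)) h2
      linarith [e1]
    · have := hc0.const_mul (1/ρ)
      simpa using this
  have hrtend : Tendsto (fun k => A.mulVec (x (k+2)) - z (k+2)) atTop (nhds 0) := by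
    apply ADMMaux.tendsto_of_edot_tendsto_zero
    simpa using hDr
  have hΔtend : Tendsto (fun k => z (k+2) - z (k+1)) atTop (nhds 0) := by
    apply ADMMaux.tendsto_of_edot_tendsto_zero
    simpa using hDΔ
    -- norm bounds
  have hbound_ν : ∀ k, ‖ν (k+1) - νs‖ ≤ Real.sqrt (ρ * V 1) := by
    intro k
    have h1 : edot (ν (k+1) - νs) (ν (k+1) - νs) ≤ ρ * V 1 := by
      have h2 := hVbound k
      have h3 : (1/ρ) * edot (ν (k+1) - νs) (ν (k+1) - νs) ≤ V (k+1) := by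
        have := mul_nonneg hρ.le (ADMMaux.edot_self_nonneg (z (k+1) - A.mulVec x₀))
        simp only [hV]
        linarith
      have h4 : (1/ρ) * edot (ν (k+1) - νs) (ν (k+1) - νs) ≤ V 1 := le_trans h3 h2
      calc edot (ν (k+1) - νs) (ν (k+1) - νs)
          = ρ * ((1/ρ) * edot (ν (k+1) - νs) (ν (k+1) - νs)) := by field_simp
        _ ≤ ρ * V 1 := mul_le_mul_of_nonneg_left h4 hρ.le
    calc ‖ν (k+1) - νs‖ ≤ Real.sqrt (edot (ν (k+1) - νs) (ν (k+1) - νs)) :=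
          ADMMaux.norm_le_sqrt_edot _
      _ ≤ Real.sqrt (ρ * V 1) := Real.sqrt_le_sqrt h1
  have hbound_z : ∀ k, ‖z (k+1) - A.mulVec x₀‖ ≤ Real.sqrt ((1/ρ) * V 1) := by
    intro k
    have h1 : edot (z (k+1) - A.mulVec x₀) (z (k+1) - A.mulVec x₀) ≤ (1/ρ) * V 1 := by
      have h2 := hVbound k
      have h3 : ρ * edot (z (k+1) - A.mulVec x₀) (z (k+1) - A.mulVec x₀) ≤ V (k+1) := by
        have := mul_nonneg (le_of_lt (by positivity : (0:ℝ) < 1/ρ))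
          (ADMMaux.edot_self_nonneg (ν (k+1) - νs))
        simp only [hV]
        linarith
      have h4 : ρ * edot (z (k+1) - A.mulVec x₀) (z (k+1) - A.mulVec x₀) ≤ V 1 :=
        le_trans h3 h2
      calc edot (z (k+1) - A.mulVec x₀) (z (k+1) - A.mulVec x₀)
          = (1/ρ) * (ρ * edot (z (k+1) - A.mulVec x₀) (z (k+1) - A.mulVec x₀)) := by
            field_simp
        _ ≤ (1/ρ) * V 1 := mul_le_mul_of_nonneg_left h4 (by positivity)
    calc ‖z (k+1) - A.mulVec x₀‖ ≤ Real.sqrt (edot (z (k+1) - A.mulVec x₀)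
          (z (k+1) - A.mulVec x₀)) := ADMMaux.norm_le_sqrt_edot _
      _ ≤ Real.sqrt ((1/ρ) * V 1) := Real.sqrt_le_sqrt h1
  set R1 : ℝ := ‖νs‖ + Real.sqrt (ρ * V 1) with hR1
  set R2 : ℝ := ‖A.mulVec x₀‖ + Real.sqrt ((1/ρ) * V 1) with hR2
  set R3 : ℝ := R2 + (R1 + R1) / ρ with hR3
  have hνR1 : ∀ k, ‖ν (k+1)‖ ≤ R1 := by
    intro k
    have h0 : ν (k+1) = νs + (ν (k+1) - νs) := by abel
    calc ‖ν (k+1)‖ = ‖νs + (ν (k+1) - νs)‖ := by rw [← h0]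
      _ ≤ ‖νs‖ + ‖ν (k+1) - νs‖ := norm_add_le _ _
      _ ≤ R1 := by have := hbound_ν k; rw [hR1]; linarith
  have hzR2 : ∀ k, ‖z (k+1)‖ ≤ R2 := by
    intro k
    have h0 : z (k+1) = A.mulVec x₀ + (z (k+1) - A.mulVec x₀) := by abel
    calc ‖z (k+1)‖ = ‖A.mulVec x₀ + (z (k+1) - A.mulVec x₀)‖ := by rw [← h0]
      _ ≤ ‖A.mulVec x₀‖ + ‖z (k+1) - A.mulVec x₀‖ := norm_add_le _ _
      _ ≤ R2 := by have := hbound_z k; rw [hR2]; linarith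
  have haR3 : ∀ k, ‖A.mulVec (x (k+2))‖ ≤ R3 := by
    intro k
    have hreq : A.mulVec (x (k+2)) = z (k+2) + (1/ρ) • (ν (k+2) - ν (k+1)) := by
      rw [hν (k+1)]
      funext i
      simp only [Pi.add_apply, Pi.smul_apply, Pi.sub_apply, smul_eq_mul]
      field_simp
      ring
    calc ‖A.mulVec (x (k+2))‖ = ‖z (k+2) + (1/ρ) • (ν (k+2) - ν (k+1))‖ := by rw [← hreq]
      _ ≤ ‖z (k+2)‖ + ‖(1/ρ) • (ν (k+2) - ν (k+1))‖ := norm_add_le _ _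
      _ ≤ R2 + (1/ρ) * ‖ν (k+2) - ν (k+1)‖ := by
          rw [norm_smul, Real.norm_eq_abs, abs_of_pos (by positivity : (0:ℝ) < 1/ρ)]
          have := hzR2 (k+1)
          linarith
      _ ≤ R2 + (1/ρ) * (‖ν (k+2)‖ + ‖ν (k+1)‖) := by
          have h5 := norm_sub_le (ν (k+2)) (ν (k+1))
          have : (0:ℝ) < 1/ρ := by positivity
          nlinarith
      _ ≤ R3 := by
          have h6 : ‖ν (k+2)‖ ≤ R1 := hνR1 (k+1)
          have h8 : (1/ρ) * (‖ν (k+2)‖ + ‖ν (k+1)‖) ≤ (1/ρ) * (R1 + R1) :=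
            mul_le_mul_of_nonneg_left (by have := hνR1 k; linarith) (by positivity)
          have h9 : (1/ρ) * (R1 + R1) = (R1 + R1)/ρ := by ring
          rw [hR3]
          linarith
  -- compactness: extract a convergent subsequence
  set P : ℕ → (Fin q → ℝ) × ((Fin q → ℝ) × (Fin q → ℝ)) :=
    fun k => (ν (k+2), (z (k+2), A.mulVec (x (k+2)))) with hP
  have hKc : IsCompact ((Metric.closedBall (0 : Fin q → ℝ) R1) ×ˢ
      ((Metric.closedBall (0 : Fin q → ℝ) R2) ×ˢ (Metric.closedBall (0 : Fin q → ℝ) R3))) :=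
    (isCompact_closedBall _ _).prod ((isCompact_closedBall _ _).prod
      (isCompact_closedBall _ _))
  have hPmem : ∀ k, P k ∈ (Metric.closedBall (0 : Fin q → ℝ) R1) ×ˢ
      ((Metric.closedBall (0 : Fin q → ℝ) R2) ×ˢ (Metric.closedBall (0 : Fin q → ℝ) R3)) := by
    intro k
    refine ⟨?_, ?_, ?_⟩
    · rw [Metric.mem_closedBall, dist_zero_right]
      exact hνR1 (k+1)
    · rw [Metric.mem_closedBall, dist_zero_right]
      exact hzR2 (k+1)
    · rw [Metric.mem_closedBall, dist_zero_right]
      exact haR3 k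
  obtain ⟨L, hLmem, φ, hφmono, hφtend⟩ := hKc.tendsto_subseq hPmem
  have hφatTop : Tendsto φ atTop atTop := hφmono.tendsto_atTop
  have hνb : Tendsto (fun k => ν (φ k + 2)) atTop (nhds L.1) :=
    (continuous_fst.tendsto L).comp hφtend
  have hzb : Tendsto (fun k => z (φ k + 2)) atTop (nhds L.2.1) :=
    ((continuous_fst.comp continuous_snd).tendsto L).comp hφtend
  have hab : Tendsto (fun k => A.mulVec (x (φ k + 2))) atTop (nhds L.2.2) :=
    ((continuous_snd.comp continuous_snd).tendsto L).comp hφtend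
    -- limit points
  set νb : Fin q → ℝ := L.1 with hνbdef
  set zb : Fin q → ℝ := L.2.1 with hzbdef
  set ab : Fin q → ℝ := L.2.2 with habdef
  -- ab = zb since the residual tends to zero
  have hr' : Tendsto (fun k => A.mulVec (x (φ k + 2)) - z (φ k + 2)) atTop (nhds 0) :=
    hrtend.comp hφatTop
  have habzb : ab = zb := by
    have h1 : Tendsto (fun k => A.mulVec (x (φ k + 2)) - z (φ k + 2)) atTop
        (nhds (ab - zb)) := hab.sub hzb
    have h2 : ab - zb = 0 := tendsto_nhds_unique h1 hr'
    have := sub_eq_zero.1 h2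
    exact this
  -- recovering x from Ax
  set B : Matrix (Fin n) (Fin q) ℝ := (Aᵀ * A)⁻¹ * Aᵀ with hB
  have hAdet : IsUnit (Aᵀ * A).det := (Matrix.isUnit_iff_isUnit_det _).1 hA
  have hBA : ∀ v : Fin n → ℝ, B.mulVec (A.mulVec v) = v := by
    intro v
    rw [Matrix.mulVec_mulVec, hB, Matrix.mul_assoc, Matrix.nonsing_inv_mul _ hAdet,
      Matrix.one_mulVec]
  set xb : Fin n → ℝ := B.mulVec ab with hxbdef
  have hxbtend : Tendsto (fun k => x (φ k + 2)) atTop (nhds xb) := by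
    have h1 : Tendsto (fun k => B.mulVec (A.mulVec (x (φ k + 2)))) atTop
        (nhds (B.mulVec ab)) := ((ADMMaux.continuous_mulVec B).tendsto ab).comp hab
    have h2 : (fun k => B.mulVec (A.mulVec (x (φ k + 2)))) = fun k => x (φ k + 2) := by
      funext k; exact hBA _
    rw [h2] at h1
    exact h1
  have hAxb : A.mulVec xb = ab :=
    tendsto_nhds_unique (((ADMMaux.continuous_mulVec A).tendsto xb).comp hxbtend) hab
  have hAxbzb : A.mulVec xb = zb := by rw [hAxb, habzb]
  -- z (φ k + 1) also tends to zb
  have hΔ' : Tendsto (fun k => z (φ k + 2) - z (φ k + 1)) atTop (nhds 0) :=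
    hΔtend.comp hφatTop
  have hzprev : Tendsto (fun k => z (φ k + 1)) atTop (nhds zb) := by
    have h1 : Tendsto (fun k => z (φ k + 2) - (z (φ k + 2) - z (φ k + 1))) atTop
        (nhds (zb - 0)) := hzb.sub hΔ'
    have h2 : (fun k => z (φ k + 2) - (z (φ k + 2) - z (φ k + 1))) =
        fun k => z (φ k + 1) := by
      funext k; abel
    rw [h2, sub_zero] at h1
    exact h1
  have hstend : Tendsto (fun k => ν (φ k + 2) + ρ • (z (φ k + 2) - z (φ k + 1))) atTop
      (nhds νb) := by
    have h1 : Tendsto (fun k => ν (φ k + 2) + ρ • (z (φ k + 2) - z (φ k + 1))) atTop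
        (nhds (νb + ρ • (0 : Fin q → ℝ))) := hνb.add (hΔ'.const_smul ρ)
    simpa using h1
  -- limit subgradient inequalities
  have hbar1 : ∀ w : Fin q → ℝ, G₂ zb + edot νb (w - zb) ≤ G₂ w := by
    intro w
    have hfl : Tendsto (fun k => G₂ (z (φ k + 2)) + edot (ν (φ k + 2)) (w - z (φ k + 2)))
        atTop (nhds (G₂ zb + edot νb (w - zb))) :=
      ((hG₂cont.tendsto zb).comp hzb).add
        (ADMMaux.edot_tendsto hνb (tendsto_const_nhds.sub hzb))
    exact le_of_tendsto_of_tendsto' hfl tendsto_const_nhds (fun k => L1 (φ k + 1) w)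
  have hbar2 : ∀ y : Fin n → ℝ, G₁ xb ≤ G₁ y + edot νb (A.mulVec y - A.mulVec xb) := by
    intro y
    have h1 : Tendsto (fun k => G₁ (x (φ k + 2))) atTop (nhds (G₁ xb)) :=
      (hG₁cont.tendsto xb).comp hxbtend
    have h2 : Tendsto (fun k => G₁ y + edot (ν (φ k + 2) + ρ • (z (φ k + 2) - z (φ k + 1)))
        (A.mulVec y - A.mulVec (x (φ k + 2)))) atTop
        (nhds (G₁ y + edot νb (A.mulVec y - ab))) :=
      tendsto_const_nhds.add (ADMMaux.edot_tendsto hstend (tendsto_const_nhds.sub hab))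
    have h3 := le_of_tendsto_of_tendsto' h1 h2 (fun k => L2 (φ k + 1) y)
    rwa [← hAxb] at h3
  have hsadbar : ∀ (x' : Fin n → ℝ) (z' : Fin q → ℝ),
      G₁ xb + G₂ (A.mulVec xb) ≤ G₁ x' + G₂ z' + edot νb (A.mulVec x' - z') := by
    intro x' z'
    have h1 := hbar1 z'
    have h2 := hbar2 x'
    rw [hAxbzb]
    have hdot : edot νb (A.mulVec x' - A.mulVec xb) - edot νb (z' - zb) =
        edot νb (A.mulVec x' - z') := by
      rw [hAxbzb, ADMMaux.edot_sub_right, ADMMaux.edot_sub_right, ADMMaux.edot_sub_right]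
      ring
    linarith
  have hminbar : ∀ y : Fin n → ℝ, G₁ xb + G₂ (A.mulVec xb) ≤ G₁ y + G₂ (A.mulVec y) := by
    intro y
    have := hsadbar y (A.mulVec y)
    simpa [sub_self, ADMMaux.edot_zero_right] using this
  -- Fejér monotonicity with respect to the limit point
  set W : ℕ → ℝ := fun k => (1/ρ) * edot (ν k - νb) (ν k - νb) +
    ρ * edot (z k - A.mulVec xb) (z k - A.mulVec xb) with hW
  have hWnonneg : ∀ k, 0 ≤ W k := by
    intro k
    have h1 := ADMMaux.edot_self_nonneg (ν k - νb)
    have h2 := ADMMaux.edot_self_nonneg (z k - A.mulVec xb)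
    have h3 := mul_nonneg (le_of_lt (by positivity : (0:ℝ) < 1/ρ)) h1
    have h4 := mul_nonneg hρ.le h2
    simp only [hW]
    linarith
  have hWmono : ∀ a b : ℕ, a ≤ b → W (b+1) ≤ W (a+1) := fun a b hab =>
    hmono νb xb hsadbar a b hab
  have hW1 : Tendsto (fun k => edot (ν (φ k + 2) - νb) (ν (φ k + 2) - νb)) atTop
      (nhds 0) := by
    have := ADMMaux.edot_tendsto (hνb.sub (tendsto_const_nhds (x := νb)))
      (hνb.sub (tendsto_const_nhds (x := νb)))
    simpa [sub_self, ADMMaux.edot_zero_right] using this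
  have hW2 : Tendsto (fun k => edot (z (φ k + 2) - A.mulVec xb)
      (z (φ k + 2) - A.mulVec xb)) atTop (nhds 0) := by
    have h0 : Tendsto (fun k => z (φ k + 2) - A.mulVec xb) atTop (nhds (zb - A.mulVec xb)) :=
      hzb.sub tendsto_const_nhds
    have hz0 : zb - A.mulVec xb = 0 := by rw [hAxbzb, sub_self]
    rw [hz0] at h0
    have := ADMMaux.edot_tendsto h0 h0
    simpa [ADMMaux.edot_zero_right] using this
  have hWsub : Tendsto (fun k => W (φ k + 2)) atTop (nhds 0) := by
    have h := (hW1.const_mul (1/ρ)).add (hW2.const_mul ρ)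
    rw [mul_zero, mul_zero, add_zero] at h
    exact h
  have hWtend : Tendsto W atTop (nhds 0) := by
    rw [Metric.tendsto_atTop]
    intro ε hε
    obtain ⟨K, hK⟩ := (hWsub.eventually (gt_mem_nhds hε)).exists
    refine ⟨φ K + 2, fun k hk => ?_⟩
    have hk1 : k - 1 + 1 = k := by omega
    have h1 : W (k - 1 + 1) ≤ W (φ K + 1 + 1) := hWmono (φ K + 1) (k - 1) (by omega)
    rw [hk1] at h1
    have h2 : W (φ K + 1 + 1) = W (φ K + 2) := rfl
    rw [h2] at h1
    rw [Real.dist_eq, sub_zero, abs_of_nonneg (hWnonneg k)]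
    calc W k ≤ W (φ K + 2) := h1
      _ < ε := hK
  have hνtend : Tendsto ν atTop (nhds νb) := by
    apply ADMMaux.tendsto_of_edot_tendsto_zero
    refine squeeze_zero (g := fun k => ρ * W k)
      (fun k => ADMMaux.edot_self_nonneg _) (fun k => ?_) ?_
    · show edot (ν k - νb) (ν k - νb) ≤ ρ * W k
      have h1 : ρ * W k = edot (ν k - νb) (ν k - νb) +
          ρ * (ρ * edot (z k - A.mulVec xb) (z k - A.mulVec xb)) := by
        simp only [hW]
        field_simp
      have h2 := mul_nonneg hρ.le (mul_nonneg hρ.le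
        (ADMMaux.edot_self_nonneg (z k - A.mulVec xb)))
      linarith [h1]
    · have h := hWtend.const_mul ρ
      rw [mul_zero] at h
      exact h
  exact ⟨νb, xb, hminbar, hνtend, hsadbar⟩
end
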